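/- Weak duality direction of the DR-CVaR reformulation (sufficiency of the dual constraints in Proposition 2): Fix γ ∈ (0,1), an integer J ≥ 1, vectors a_1,…,a_J ∈ ℝ^d and scalars b_1,…,b_J ∈ ℝ. Set α_j := a_j/γ and β_j(τ) := (b_j + γτ − τ)/γ for j ∈ {1,…,J}, and α_{J+1} := 0, β_{J+1}(τ) := τ. Let D be a real d×m matrix with full row rank, D⁺ := Dᵀ(DDᵀ)⁻¹, c'(x,y) := ‖D⁺(x − y)‖₂, and M := D⁺((D⁺)ᵀD⁺)⁻¹. Let H ∈ ℝ^{q×d}, h ∈ ℝ^q, 𝒮 := {ξ ∈ ℝ^d : Hξ ≤ h} nonempty and compact, x̂_1,…,x̂_n ∈ 𝒮, P̂ := (1/n) Σ_{i=1}^n δ_{x̂_i}, and ε ≥ 0. Suppose there exist τ ∈ ℝ, λ ≥ 0, s_1,…,s_n ∈ ℝ, and componentwise-nonnegative ζ_{ij} ∈ ℝ^q (i ∈ {1,…,n}, j ∈ {1,…,J+1}) such that λεn + Σ_{i=1}^n s_i ≤ 0, α_jᵀ x̂_i + β_j(τ) + ζ_{ij}ᵀ(h − H x̂_i) ≤ s_i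 for all i, j, and ‖M(Hᵀζ_{ij} − α_j)‖₂ ≤ λ for all i, j. Then every Borel probability measure Q on ℝ^d with Q(𝒮) = 1 and W_{c'}(Q, P̂) ≤ ε satisfies CVaR_{1−γ}^Q( x ↦ max_{j∈{1,…,J}} a_jᵀx + b_j ) ≤ 0. -/

import Mathlib

open MeasureTheory Matrix ENNReal

/-- Euclidean norm on `Fin k → ℝ`. -/
noncomputable def e2 {k : ℕ} (x : Fin k → ℝ) : ℝ := Real.sqrt (∑ i, (x i) ^ 2)

/-- Optimal transport cost between two Borel probability measures, for a cost
function `c`, valued in `[0,∞]`: infimum over all couplings of the integral of the cost. -/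
noncomputable def Wc {E F : Type*} [MeasurableSpace E] [MeasurableSpace F]
    (c : E → F → ℝ) (μ : Measure E) (ν : Measure F) : ℝ≥0∞ :=
  ⨅ π ∈ {π : Measure (E × F) |
      IsProbabilityMeasure π ∧ π.map Prod.fst = μ ∧ π.map Prod.snd = ν},
    ∫⁻ p, ENNReal.ofReal (c p.1 p.2) ∂π

/-- Conditional value-at-risk of `f` under `Q` at level `1 - γ`. -/
noncomputable def cvar {d : ℕ} (γ : ℝ) (Q : Measure (Fin d → ℝ))
    (f : (Fin d → ℝ) → ℝ) : ℝ :=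
  ⨅ τ : ℝ, τ + (1 / γ) * ∫ x, max 0 (f x - τ) ∂Q

lemma e2_nonneg {k : ℕ} (x : Fin k → ℝ) : 0 ≤ e2 x := Real.sqrt_nonneg _

lemma e2_neg {k : ℕ} (x : Fin k → ℝ) : e2 (-x) = e2 x := by
  simp [e2, neg_sq]

lemma dot_le_e2 {k : ℕ} (v w : Fin k → ℝ) : v ⬝ᵥ w ≤ e2 v * e2 w := by
  calc v ⬝ᵥ w = ∑ i, v i * w i := rfl
    _ ≤ |∑ i, v i * w i| := le_abs_self _
    _ = Real.sqrt ((∑ i, v i * w i) ^ 2) := (Real.sqrt_sq_eq_abs _).symm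
    _ ≤ Real.sqrt ((∑ i, v i ^ 2) * (∑ i, w i ^ 2)) :=
        Real.sqrt_le_sqrt (Finset.sum_mul_sq_le_sq_mul_sq Finset.univ v w)
    _ = e2 v * e2 w := by
        rw [e2, e2, ← Real.sqrt_mul (by positivity)]

lemma continuous_e2 {k : ℕ} : Continuous (e2 (k := k)) := by
  unfold e2
  exact Real.continuous_sqrt.comp (continuous_finset_sum _ fun i _ => (continuous_apply i).pow 2)

lemma continuous_mulVec {k l : ℕ} (A : Matrix (Fin k) (Fin l) ℝ) :
    Continuous fun v : Fin l → ℝ => A.mulVec v := by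
  apply continuous_pi; intro i
  simp only [Matrix.mulVec, dotProduct]
  exact continuous_finset_sum _ fun j _ => (continuous_const.mul (continuous_apply j))

lemma measurable_of_support_finite {X : Type*} [MeasurableSpace X] [MeasurableSingletonClass X]
    (f : X → ℝ) (hf : {y | f y ≠ 0}.Finite) : Measurable f := by
  intro B hB
  have hsplit : f ⁻¹' B = ({y | f y ≠ 0} ∩ f ⁻¹' B) ∪ ({y | f y ≠ 0}ᶜ ∩ f ⁻¹' B) := by
    rw [← Set.union_inter_distrib_right, Set.union_compl_self, Set.univ_inter]
  rw [hsplit]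
  apply MeasurableSet.union
  · exact ((hf.subset Set.inter_subset_left).measurableSet)
  · by_cases h0 : (0 : ℝ) ∈ B
    · have : {y | f y ≠ 0}ᶜ ∩ f ⁻¹' B = {y | f y ≠ 0}ᶜ := by
        ext y
        simp only [Set.mem_inter_iff, Set.mem_compl_iff, Set.mem_setOf_eq, not_not,
          Set.mem_preimage, and_iff_left_iff_imp]
        intro hy; rw [hy]; exact h0
      rw [this]; exact hf.measurableSet.compl
    · have : {y | f y ≠ 0}ᶜ ∩ f ⁻¹' B = ∅ := by
        ext y
        simp only [Set.mem_inter_iff, Set.mem_compl_iff, Set.mem_setOf_eq, not_not,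
          Set.mem_preimage, Set.mem_empty_iff_false, iff_false, not_and]
        intro hy; rw [hy]; exact h0
      rw [this]; exact MeasurableSet.empty

lemma continuous_finset_sup' {ι X : Type*} [TopologicalSpace X] {s : Finset ι}
    (hne : s.Nonempty) (f : ι → X → ℝ) (hf : ∀ i, Continuous (f i)) :
    Continuous fun x => s.sup' hne (fun i => f i x) := by
  rw [continuous_iff_continuousAt]
  intro x
  exact ContinuousAt.finset_sup'_apply hne (fun i _ => (hf i).continuousAt)

lemma isUnit_det_of_rank_eq_card {k : ℕ} (A : Matrix (Fin k) (Fin k) ℝ) (hA : A.rank = k) :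
    IsUnit A.det := by
  have hr : LinearMap.range A.mulVecLin = ⊤ := by
    apply Submodule.eq_top_of_finrank_eq
    show A.rank = _
    rw [hA, Module.finrank_pi, Fintype.card_fin]
  have hsurj : Function.Surjective A.mulVec := by
    intro v
    obtain ⟨u, hu⟩ := LinearMap.range_eq_top.mp hr v
    exact ⟨u, hu⟩
  exact A.isUnit_iff_isUnit_det.mp (Matrix.mulVec_surjective_iff_isUnit.mp hsurj)

lemma pinv_dot {d m : ℕ} (D : Matrix (Fin d) (Fin m) ℝ) (hD : D.rank = d)
    (v u : Fin d → ℝ) :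
    v ⬝ᵥ u = ((Dᵀ * (D * Dᵀ)⁻¹) *
        ((Dᵀ * (D * Dᵀ)⁻¹)ᵀ * (Dᵀ * (D * Dᵀ)⁻¹))⁻¹).mulVec v ⬝ᵥ
      (Dᵀ * (D * Dᵀ)⁻¹).mulVec u := by
  set Dp := Dᵀ * (D * Dᵀ)⁻¹ with hDp
  set G := Dpᵀ * Dp with hGdef
  have hDDt : IsUnit (D * Dᵀ).det :=
    isUnit_det_of_rank_eq_card _ (by rw [Matrix.rank_self_mul_transpose, hD])
  have hDpRank : Dp.rank = d := by
    rw [hDp, Matrix.rank_mul_eq_left_of_isUnit_det _ _ (Matrix.isUnit_nonsing_inv_det _ hDDt),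
      Matrix.rank_transpose, hD]
  have hG : IsUnit G.det :=
    isUnit_det_of_rank_eq_card _ (by rw [hGdef, Matrix.rank_transpose_mul_self, hDpRank])
  have hMD : Dpᵀ * (Dp * G⁻¹) = 1 := by
    rw [← Matrix.mul_assoc, ← hGdef, Matrix.mul_nonsing_inv _ hG]
  calc v ⬝ᵥ u = ((Dpᵀ * (Dp * G⁻¹)).mulVec v) ⬝ᵥ u := by rw [hMD, Matrix.one_mulVec]
    _ = (Dpᵀ.mulVec ((Dp * G⁻¹).mulVec v)) ⬝ᵥ u := by rw [Matrix.mulVec_mulVec]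
    _ = (Matrix.vecMul ((Dp * G⁻¹).mulVec v) Dp) ⬝ᵥ u := by rw [Matrix.mulVec_transpose]
    _ = ((Dp * G⁻¹).mulVec v) ⬝ᵥ Dp.mulVec u := (Matrix.dotProduct_mulVec _ _ _).symm

/-- Weak duality direction of the DR-CVaR reformulation (sufficiency of the dual
constraints in Proposition 2). -/
theorem drcvar_weak_duality
    (γ : ℝ) (hγ0 : 0 < γ) (hγ1 : γ < 1)
    (d m q n J : ℕ) (hJ : 1 ≤ J) (hn : 1 ≤ n)
    (a : Fin J → (Fin d → ℝ)) (b : Fin J → ℝ)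
    (α : Fin (J + 1) → (Fin d → ℝ)) (β : ℝ → Fin (J + 1) → ℝ)
    (hα : ∀ j : Fin J, α j.castSucc = γ⁻¹ • a j)
    (hαlast : α (Fin.last J) = 0)
    (hβ : ∀ (τ : ℝ) (j : Fin J), β τ j.castSucc = (b j + γ * τ - τ) / γ)
    (hβlast : ∀ τ : ℝ, β τ (Fin.last J) = τ)
    (D : Matrix (Fin d) (Fin m) ℝ) (hD : D.rank = d)
    (H : Matrix (Fin q) (Fin d) ℝ) (h : Fin q → ℝ)
    (hSne : {ξ : Fin d → ℝ | H.mulVec ξ ≤ h}.Nonempty)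
    (hScompact : IsCompact {ξ : Fin d → ℝ | H.mulVec ξ ≤ h})
    (xh : Fin n → (Fin d → ℝ)) (hxh : ∀ i, xh i ∈ {ξ : Fin d → ℝ | H.mulVec ξ ≤ h})
    (ε : ℝ) (hε : 0 ≤ ε)
    (τ : ℝ) (lam : ℝ) (s : Fin n → ℝ) (ζ : Fin n → Fin (J + 1) → Fin q → ℝ)
    (hlam : 0 ≤ lam) (hζ : ∀ i j, 0 ≤ ζ i j)
    (hsum : lam * ε * n + ∑ i, s i ≤ 0)
    (haff : ∀ i j, α j ⬝ᵥ xh i + β τ j + ζ i j ⬝ᵥ (h - H.mulVec (xh i)) ≤ s i)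
    (hnorm : ∀ i j, e2 ((((Dᵀ * (D * Dᵀ)⁻¹)) *
        (((Dᵀ * (D * Dᵀ)⁻¹)ᵀ * (Dᵀ * (D * Dᵀ)⁻¹))⁻¹)).mulVec
        (Hᵀ.mulVec (ζ i j) - α j)) ≤ lam) :
    ∀ Q : Measure (Fin d → ℝ), IsProbabilityMeasure Q →
      Q {ξ : Fin d → ℝ | H.mulVec ξ ≤ h} = 1 →
      Wc (fun x y => e2 ((Dᵀ * (D * Dᵀ)⁻¹).mulVec (x - y))) Q
          ((n : ℝ≥0∞)⁻¹ • ∑ i : Fin n, Measure.dirac (xh i)) ≤ ENNReal.ofReal ε →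
      cvar γ Q (fun x =>
        Finset.univ.sup' ⟨⟨0, hJ⟩, Finset.mem_univ _⟩
          (fun j : Fin J => a j ⬝ᵥ x + b j)) ≤ 0 := by
  intro Q hQprob hQS hW
  set S := {ξ : Fin d → ℝ | H.mulVec ξ ≤ h} with hSdef
  set Dp := Dᵀ * (D * Dᵀ)⁻¹ with hDpdef
  set Mm := Dp * (Dpᵀ * Dp)⁻¹ with hMmdef
  have hdot : ∀ v u : Fin d → ℝ, v ⬝ᵥ u = Mm.mulVec v ⬝ᵥ Dp.mulVec u := fun v u =>
    pinv_dot D hD v u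
  -- the two sup' functions
  have hJne : (Finset.univ : Finset (Fin J)).Nonempty := ⟨⟨0, hJ⟩, Finset.mem_univ _⟩
  set f : (Fin d → ℝ) → ℝ := fun x =>
    Finset.univ.sup' ⟨⟨0, hJ⟩, Finset.mem_univ _⟩ (fun j : Fin J => a j ⬝ᵥ x + b j) with hfdef
  have hJ1ne : (Finset.univ : Finset (Fin (J + 1))).Nonempty :=
    ⟨Fin.last J, Finset.mem_univ _⟩
  set g : (Fin d → ℝ) → ℝ := fun x =>
    Finset.univ.sup' hJ1ne (fun j : Fin (J + 1) => α j ⬝ᵥ x + β τ j) with hgdef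
  -- pointwise claim
  have claim : ∀ x ∈ S, ∀ i, g x ≤ s i + lam * e2 (Dp.mulVec (x - xh i)) := by
    intro x hx i
    apply Finset.sup'_le
    intro j _
    have hxS : ∀ k, H.mulVec x k ≤ h k := fun k => (Pi.le_def.mp hx) k
    have h1 : 0 ≤ ζ i j ⬝ᵥ (h - H.mulVec x) :=
      Finset.sum_nonneg fun k _ =>
        mul_nonneg (hζ i j k) (sub_nonneg.mpr (hxS k))
    have hHu : Hᵀ.mulVec (ζ i j) ⬝ᵥ (x - xh i) = ζ i j ⬝ᵥ H.mulVec (x - xh i) := by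
      rw [Matrix.mulVec_transpose]
      exact (Matrix.dotProduct_mulVec _ _ _).symm
    have h2 : ζ i j ⬝ᵥ (h - H.mulVec (xh i)) =
        ζ i j ⬝ᵥ (h - H.mulVec x) + Hᵀ.mulVec (ζ i j) ⬝ᵥ (x - xh i) := by
      rw [hHu, Matrix.mulVec_sub]
      simp only [dotProduct_sub]
      ring
    have h4 : -((Hᵀ.mulVec (ζ i j) - α j) ⬝ᵥ (x - xh i)) ≤
        lam * e2 (Dp.mulVec (x - xh i)) := by
      calc -((Hᵀ.mulVec (ζ i j) - α j) ⬝ᵥ (x - xh i))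
          = (-(Hᵀ.mulVec (ζ i j) - α j)) ⬝ᵥ (x - xh i) := by rw [neg_dotProduct]
        _ = Mm.mulVec (-(Hᵀ.mulVec (ζ i j) - α j)) ⬝ᵥ Dp.mulVec (x - xh i) := hdot _ _
        _ ≤ e2 (Mm.mulVec (-(Hᵀ.mulVec (ζ i j) - α j))) * e2 (Dp.mulVec (x - xh i)) :=
            dot_le_e2 _ _
        _ = e2 (Mm.mulVec (Hᵀ.mulVec (ζ i j) - α j)) * e2 (Dp.mulVec (x - xh i)) := by
            rw [Matrix.mulVec_neg, e2_neg]
        _ ≤ lam * e2 (Dp.mulVec (x - xh i)) :=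
            mul_le_mul_of_nonneg_right (hnorm i j) (e2_nonneg _)
    have h5 := haff i j
    have hax : α j ⬝ᵥ x = α j ⬝ᵥ xh i + α j ⬝ᵥ (x - xh i) := by
      rw [dotProduct_sub]; ring
    have hvu : α j ⬝ᵥ (x - xh i) - Hᵀ.mulVec (ζ i j) ⬝ᵥ (x - xh i) =
        -((Hᵀ.mulVec (ζ i j) - α j) ⬝ᵥ (x - xh i)) := by
      rw [sub_dotProduct]; ring
    linarith [h1, h2, h4, h5, hax, hvu]
  -- pointwise identity relating g and the CVaR integrand
  have hmono : ∀ t : ℝ, τ + (1 / γ) * max 0 t = max τ (τ + t / γ) := by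
    intro t
    rcases le_total t 0 with ht | ht
    · have hdn : t / γ ≤ 0 := div_nonpos_of_nonpos_of_nonneg ht hγ0.le
      rw [max_eq_left ht, max_eq_left (by linarith)]
      ring
    · rw [max_eq_right ht, max_eq_right (le_add_of_nonneg_right (div_nonneg ht hγ0.le))]
      rw [one_div, ← div_eq_inv_mul]
  have hid : ∀ x, g x = τ + (1 / γ) * max 0 (f x - τ) := by
    intro x
    rw [hmono]
    apply le_antisymm
    · apply Finset.sup'_le
      intro j _
      rcases Fin.eq_castSucc_or_eq_last j with ⟨j', rfl⟩ | rfl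
      · rw [hα, hβ, smul_dotProduct]
        have hf' : a j' ⬝ᵥ x + b j' ≤ f x :=
          Finset.le_sup' (fun j : Fin J => a j ⬝ᵥ x + b j) (Finset.mem_univ j')
        have key : γ⁻¹ * (a j' ⬝ᵥ x) + (b j' + γ * τ - τ) / γ ≤ τ + (f x - τ) / γ := by
          rw [div_eq_inv_mul, div_eq_inv_mul]
          have hinv : γ⁻¹ * γ = 1 := inv_mul_cancel₀ hγ0.ne'
          have hinvτ : γ⁻¹ * (γ * τ) = τ := by rw [← mul_assoc, hinv, one_mul]
          have hP : 0 ≤ γ⁻¹ * (f x - (a j' ⬝ᵥ x + b j')) :=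
            mul_nonneg (inv_pos.mpr hγ0).le (sub_nonneg.mpr hf')
          nlinarith [hinvτ, hP]
        exact key.trans (le_max_right _ _)
      · rw [hαlast, hβlast, zero_dotProduct, zero_add]
        exact le_max_left _ _
    · apply max_le
      · calc τ = α (Fin.last J) ⬝ᵥ x + β τ (Fin.last J) := by
              rw [hαlast, hβlast, zero_dotProduct, zero_add]
          _ ≤ g x := Finset.le_sup' (fun j : Fin (J + 1) => α j ⬝ᵥ x + β τ j)
              (Finset.mem_univ _)
      · obtain ⟨j, _, hj⟩ := Finset.exists_mem_eq_sup' hJne (fun j : Fin J => a j ⬝ᵥ x + b j)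
        have hfx : f x = a j ⬝ᵥ x + b j := hj
        have heq : τ + (f x - τ) / γ = α j.castSucc ⬝ᵥ x + β τ j.castSucc := by
          rw [hα, hβ, smul_dotProduct, hfx]
          field_simp
          rw [smul_eq_mul, one_div, mul_inv_cancel_left₀ hγ0.ne']
          ring
        rw [heq]
        exact Finset.le_sup' (fun j : Fin (J + 1) => α j ⬝ᵥ x + β τ j) (Finset.mem_univ _)
  -- continuity
  have hdotcont : ∀ w : Fin d → ℝ, Continuous fun x : Fin d → ℝ => w ⬝ᵥ x := by
    intro w
    simp only [dotProduct]
    exact continuous_finset_sum _ fun k _ => continuous_const.mul (continuous_apply k)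
  have hgcont : Continuous g :=
    continuous_finset_sup' hJ1ne _ fun j => (hdotcont (α j)).add continuous_const
  have hfcont : Continuous f :=
    continuous_finset_sup' hJne _ fun j => (hdotcont (a j)).add continuous_const
  have hSmeas : MeasurableSet S := hScompact.isClosed.measurableSet
  have hQSc : Q Sᶜ = 0 := (prob_compl_eq_zero_iff hSmeas).mpr hQS
  have hQae : ∀ᵐ x ∂Q, x ∈ S := by
    rw [ae_iff]
    exact hQSc
  obtain ⟨Cg, hCg⟩ := hScompact.exists_bound_of_continuousOn hgcont.continuousOn
  -- the atom weight function
  classical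
  set sh : (Fin d → ℝ) → ℝ := fun y =>
    if hy : ∃ i, xh i = y then
      (Finset.univ.filter fun i => xh i = y).inf'
        ⟨hy.choose, by simp [Finset.mem_filter, hy.choose_spec]⟩ s
    else 0 with hshdef
  have hsh1 : ∀ i, sh (xh i) ≤ s i := by
    intro i
    rw [hshdef]
    simp only
    rw [dif_pos ⟨i, rfl⟩]
    exact Finset.inf'_le _ (by simp)
  have hsh2 : ∀ y : Fin d → ℝ, (∃ i, xh i = y) → ∃ k, xh k = y ∧ sh y = s k := by
    intro y hy
    rw [hshdef]
    simp only
    rw [dif_pos hy]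
    obtain ⟨k, hk, hks⟩ := Finset.exists_mem_eq_inf'
      (⟨hy.choose, by simp [Finset.mem_filter, hy.choose_spec]⟩ :
        (Finset.univ.filter fun i => xh i = y).Nonempty) s
    exact ⟨k, (Finset.mem_filter.mp hk).2, hks⟩
  have hshmeas : Measurable sh := by
    apply measurable_of_support_finite
    apply (Set.finite_range xh).subset
    intro y hy
    by_contra hc
    simp only [Set.mem_range] at hc
    apply hy
    rw [hshdef]
    simp only
    rw [dif_neg hc]
  have hnR : (0 : ℝ) < n := by exact_mod_cast hn
  have hInne : (Finset.univ : Finset (Fin n)).Nonempty := ⟨⟨0, hn⟩, Finset.mem_univ _⟩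
  set B : ℝ := Finset.univ.sup' hInne (fun i => |s i|) with hBdef
  have hshB : ∀ y ∈ Set.range xh, |sh y| ≤ B := by
    rintro y ⟨i, rfl⟩
    obtain ⟨k, hk, hks⟩ := hsh2 (xh i) ⟨i, rfl⟩
    rw [hks]
    exact Finset.le_sup' (fun i => |s i|) (Finset.mem_univ k)
  -- cost continuity and bound on S × S
  have hccont : Continuous fun p : (Fin d → ℝ) × (Fin d → ℝ) => e2 (Dp.mulVec (p.1 - p.2)) :=
    continuous_e2.comp ((continuous_mulVec Dp).comp (continuous_fst.sub continuous_snd))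
  obtain ⟨Cc, hCc⟩ := (hScompact.prod hScompact).exists_bound_of_continuousOn hccont.continuousOn
  -- the main integral bound
  have main : ∀ δ : ℝ, 0 < δ →
      ∫ x, g x ∂Q ≤ ((n : ℝ)⁻¹ * ∑ i, s i + lam * ε) + lam * δ := by
    intro δ hδ
    have hlt : Wc (fun x y => e2 (Dp.mulVec (x - y))) Q
        ((n : ℝ≥0∞)⁻¹ • ∑ i : Fin n, Measure.dirac (xh i)) <
        ENNReal.ofReal ε + ENNReal.ofReal δ :=
      lt_of_le_of_lt hW
        (ENNReal.lt_add_right ENNReal.ofReal_ne_top (ENNReal.ofReal_pos.mpr hδ).ne')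
    unfold Wc at hlt
    simp only [iInf_lt_iff, Set.mem_setOf_eq] at hlt
    obtain ⟨π, ⟨⟨hπprob, hπfst, hπsnd⟩, hπc⟩⟩ := hlt
    haveI := hπprob
    -- a.e. facts
    have hfstae : ∀ᵐ p ∂π, p.1 ∈ S := by
      rw [ae_iff]
      have : {p : (Fin d → ℝ) × (Fin d → ℝ) | ¬ p.1 ∈ S} = Prod.fst ⁻¹' Sᶜ := rfl
      rw [this, ← Measure.map_apply measurable_fst hSmeas.compl, hπfst, hQSc]
    have hrange_meas : MeasurableSet (Set.range xh) := (Set.finite_range xh).measurableSet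
    have hν_range : ((n : ℝ≥0∞)⁻¹ • ∑ i : Fin n, Measure.dirac (xh i))
        (Set.range xh)ᶜ = 0 := by
      rw [Measure.smul_apply, Measure.finset_sum_apply]
      have : ∀ i : Fin n, Measure.dirac (xh i) (Set.range xh)ᶜ = 0 := by
        intro i
        rw [Measure.dirac_apply' _ hrange_meas.compl]
        exact Set.indicator_of_notMem (by simp) _
      simp [this]
    have hsndae : ∀ᵐ p ∂π, p.2 ∈ Set.range xh := by
      rw [ae_iff]
      have : {p : (Fin d → ℝ) × (Fin d → ℝ) | ¬ p.2 ∈ Set.range xh} =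
        Prod.snd ⁻¹' (Set.range xh)ᶜ := rfl
      rw [this, ← Measure.map_apply measurable_snd hrange_meas.compl, hπsnd, hν_range]
    -- a.e. pointwise inequality
    have haeineq : ∀ᵐ p ∂π, g p.1 ≤ sh p.2 + lam * e2 (Dp.mulVec (p.1 - p.2)) := by
      filter_upwards [hfstae, hsndae] with p hp1 hp2
      obtain ⟨k, hk, hks⟩ := hsh2 p.2 (by obtain ⟨i, hi⟩ := hp2; exact ⟨i, hi⟩)
      calc g p.1 ≤ s k + lam * e2 (Dp.mulVec (p.1 - xh k)) := claim p.1 hp1 k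
        _ = sh p.2 + lam * e2 (Dp.mulVec (p.1 - p.2)) := by rw [hks, hk]
    -- integrability
    have int_g : Integrable (fun p : (Fin d → ℝ) × (Fin d → ℝ) => g p.1) π := by
      apply Integrable.mono' (integrable_const Cg)
        ((hgcont.comp continuous_fst).aestronglyMeasurable)
      filter_upwards [hfstae] with p hp using hCg _ hp
    have int_sh : Integrable (fun p : (Fin d → ℝ) × (Fin d → ℝ) => sh p.2) π := by
      apply Integrable.mono' (integrable_const B)
        ((hshmeas.comp measurable_snd).aestronglyMeasurable)
      filter_upwards [hsndae] with p hp
      rw [Real.norm_eq_abs]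
      exact hshB _ hp
    have int_c : Integrable
        (fun p : (Fin d → ℝ) × (Fin d → ℝ) => e2 (Dp.mulVec (p.1 - p.2))) π := by
      apply Integrable.mono' (integrable_const Cc) hccont.aestronglyMeasurable
      filter_upwards [hfstae, hsndae] with p hp1 hp2
      apply hCc
      exact Set.mk_mem_prod hp1 (by obtain ⟨i, hi⟩ := hp2; rw [← hi]; exact hxh i)
    have int_rhs : Integrable (fun p : (Fin d → ℝ) × (Fin d → ℝ) =>
        sh p.2 + lam * e2 (Dp.mulVec (p.1 - p.2))) π := int_sh.add (int_c.const_mul lam)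
    -- the ν integral of sh
    have int_dirac : ∀ i : Fin n, Integrable sh (Measure.dirac (xh i)) := fun i =>
      (integrable_const (sh (xh i))).congr (ae_eq_dirac sh).symm
    have hshν : ∫ y, sh y ∂((n : ℝ≥0∞)⁻¹ • ∑ i : Fin n, Measure.dirac (xh i)) =
        (n : ℝ)⁻¹ * ∑ i, sh (xh i) := by
      rw [integral_smul_measure, integral_finset_sum_measure (fun i _ => int_dirac i)]
      simp only [integral_dirac]
      rw [ENNReal.toReal_inv, ENNReal.toReal_natCast, smul_eq_mul]
    have hcost : ∫ p, e2 (Dp.mulVec (p.1 - p.2)) ∂π ≤ ε + δ := by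
      rw [integral_eq_lintegral_of_nonneg_ae (Filter.Eventually.of_forall fun p => e2_nonneg _)
        hccont.aestronglyMeasurable]
      have hle : ∫⁻ p, ENNReal.ofReal (e2 (Dp.mulVec (p.1 - p.2))) ∂π ≤
          ENNReal.ofReal (ε + δ) := by
        rw [ENNReal.ofReal_add hε hδ.le]
        exact hπc.le
      calc (∫⁻ p, ENNReal.ofReal (e2 (Dp.mulVec (p.1 - p.2))) ∂π).toReal
          ≤ (ENNReal.ofReal (ε + δ)).toReal := ENNReal.toReal_mono ENNReal.ofReal_ne_top hle
        _ = ε + δ := ENNReal.toReal_ofReal (by positivity)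
    calc ∫ x, g x ∂Q = ∫ p, g p.1 ∂π := by
          rw [← hπfst, integral_map measurable_fst.aemeasurable]
          rw [hπfst]
          exact hgcont.aestronglyMeasurable
      _ ≤ ∫ p, (sh p.2 + lam * e2 (Dp.mulVec (p.1 - p.2))) ∂π :=
          integral_mono_ae int_g int_rhs haeineq
      _ = ∫ p, sh p.2 ∂π + lam * ∫ p, e2 (Dp.mulVec (p.1 - p.2)) ∂π := by
          rw [integral_add int_sh (int_c.const_mul lam), integral_const_mul]
      _ = ∫ y, sh y ∂((n : ℝ≥0∞)⁻¹ • ∑ i : Fin n, Measure.dirac (xh i)) +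
          lam * ∫ p, e2 (Dp.mulVec (p.1 - p.2)) ∂π := by
          rw [← hπsnd, integral_map measurable_snd.aemeasurable]
          rw [hπsnd]
          exact hshmeas.aestronglyMeasurable
      _ ≤ (n : ℝ)⁻¹ * ∑ i, s i + lam * (ε + δ) := by
          rw [hshν]
          apply add_le_add
          · exact mul_le_mul_of_nonneg_left (Finset.sum_le_sum fun i _ => hsh1 i)
              (by positivity)
          · exact mul_le_mul_of_nonneg_left hcost hlam
      _ = ((n : ℝ)⁻¹ * ∑ i, s i + lam * ε) + lam * δ := by ring
  have hgle : ∫ x, g x ∂Q ≤ (n : ℝ)⁻¹ * ∑ i, s i + lam * ε := by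
    apply _root_.le_of_forall_pos_le_add
    intro δ hδ
    have hδ' : 0 < δ / (lam + 1) := by positivity
    refine (main _ hδ').trans ?_
    have : lam * (δ / (lam + 1)) ≤ δ := by
      rw [mul_div_assoc']
      rw [div_le_iff₀ (by positivity)]
      nlinarith
    linarith
  have hfinal : ∫ x, g x ∂Q ≤ 0 := by
    refine hgle.trans ?_
    have h7 : (n : ℝ)⁻¹ * (lam * ε * n + ∑ i, s i) ≤ 0 :=
      mul_nonpos_of_nonneg_of_nonpos (by positivity) hsum
    have h8 : (n : ℝ)⁻¹ * (lam * ε * n) = lam * ε := by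
      field_simp
    have h9 : (n : ℝ)⁻¹ * (lam * ε * n + ∑ i, s i) =
        lam * ε + (n : ℝ)⁻¹ * ∑ i, s i := by
      rw [mul_add, h8]
    linarith
  -- conclude about cvar
  have hmaxcont : Continuous fun x => max 0 (f x - τ) :=
    continuous_const.max (hfcont.sub continuous_const)
  obtain ⟨Cm, hCm⟩ := hScompact.exists_bound_of_continuousOn hmaxcont.continuousOn
  have int_max : Integrable (fun x => max 0 (f x - τ)) Q := by
    apply Integrable.mono' (integrable_const Cm) hmaxcont.aestronglyMeasurable
    filter_upwards [hQae] with x hx using hCm _ hx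
  have hFτ : τ + (1 / γ) * ∫ x, max 0 (f x - τ) ∂Q ≤ 0 := by
    have heq : ∫ x, g x ∂Q = τ + (1 / γ) * ∫ x, max 0 (f x - τ) ∂Q := by
      have : ∫ x, g x ∂Q = ∫ x, (τ + (1 / γ) * max 0 (f x - τ)) ∂Q :=
        integral_congr_ae (Filter.Eventually.of_forall fun x => hid x)
      rw [this, integral_add (integrable_const τ) (int_max.const_mul _),
        integral_const, integral_const_mul]
      simp [measure_univ]
    linarith
  by_cases hbd : BddBelow (Set.range fun τ' : ℝ => τ' + (1 / γ) * ∫ x, max 0 (f x - τ') ∂Q)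
  · exact le_trans (ciInf_le hbd τ) hFτ
  · rw [cvar, Real.iInf_of_not_bddBelow hbd]
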